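/- Let s_1,…,s_k be nonzero supply vectors on a capacitated undirected graph G=(V,E,c), for each i let w_i ∈ argmax_{v∈V} |s_i(v)| be a master source of s_i, and let η = max_{1≤i≤k} (Σ_{v∈V} |s_i(v)|) / |s_i(w_i)| be the concentration of the supply vectors. Then λ(G; s_1∘w_1,…,s_k∘w_k) ≥ λ(G; s_1,…,s_k) / max{η−1, 1}. -/

import Mathlib

open Finset

/-- A flow `f` on an (arbitrarily oriented) undirected graph satisfies the
demand vector `d` if at every vertex the net inflow equals the demand. -/
def satisfiesFlow {V E : Type*} [Fintype E] [DecidableEq V]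
    (hd tl : E → V) (f : E → ℝ) (d : V → ℝ) : Prop :=
  ∀ v : V, d v = (∑ e : E, if hd e = v then f e else 0)
      - (∑ e : E, if tl e = v then f e else 0)

/-- `assign s v` is the demand vector `s ∘ v` obtained from the supply vector `s`
by making `v` the target: it agrees with `s` off `v` and has value
`-∑_{u ≠ v} s u` at `v`. -/
def assign {V : Type*} [Fintype V] [DecidableEq V] (s : V → ℝ) (v : V) : V → ℝ :=
  fun u => if u = v then -(∑ w ∈ univ.erase v, s w) else s u

/-- The optimum of the maximum concurrent multi-commodity flow problem for
demand vectors `d i` on the capacitated graph given by `hd`, `tl`, `c`: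
the largest `l ≥ 0` such that some valid multi-commodity flow satisfies `l • d i`
for all `i`. -/
noncomputable def lamD {V E ι : Type*} [Fintype V] [Fintype E] [Fintype ι] [DecidableEq V]
    (hd tl : E → V) (c : E → ℝ) (d : ι → V → ℝ) : ℝ :=
  sSup {l : ℝ | 0 ≤ l ∧ ∃ f : ι → E → ℝ,
    (∀ e, ∑ i, |f i e| ≤ c e) ∧
    ∀ i, satisfiesFlow hd tl (f i) (fun v => l * d i v)}

/-- The optimum of the target location problem LoMuF for supply vectors `s i`:
the best value of `lamD` over all choices of targets. -/
noncomputable def lamS {V E ι : Type*} [Fintype V] [Fintype E] [Fintype ι] [DecidableEq V]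
    (hd tl : E → V) (c : E → ℝ) (s : ι → V → ℝ) : ℝ :=
  sSup {l : ℝ | 0 ≤ l ∧ ∃ (v : ι → V) (f : ι → E → ℝ),
    (∀ e, ∑ i, |f i e| ≤ c e) ∧
    ∀ i, satisfiesFlow hd tl (f i) (fun u => l * assign (s i) (v i) u)}

/-!
A valid flow for the targets `v i` is turned into one for the master sources `w i` commodity
by commodity. Since `v i` is the only sink of the flow `f i`, it contains a conformal subflow
carrying the whole supply `l |s i (w i)|` of `w i` to `v i` (a max-flow/min-cut argument:
maximize over a compact set, then use the residually reachable set as a cut). Subtracting this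
subflow amplified by `η_i = ∑ |s i| / |s i (w i)|` turns the demand `s i ∘ v i` into
`s i ∘ w i`, and on every edge the result is at most `max (η_i - 1) 1` times `|f i|`.
-/

open Set Filter Topology

section NetInflow

variable {V E : Type*} [Fintype E] [DecidableEq V] (hd tl : E → V)

def netInflow : (E → ℝ) →ₗ[ℝ] V → ℝ :=
  Fintype.linearCombination ℝ fun e => Pi.single (hd e) 1 - Pi.single (tl e) 1

theorem netInflow_apply (f : E → ℝ) (x : V) :
    netInflow hd tl f x
      = (∑ e, if hd e = x then f e else 0) - ∑ e, if tl e = x then f e else 0 := by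
  simp only [netInflow, Fintype.linearCombination_apply, Finset.sum_apply, Pi.smul_apply,
    Pi.sub_apply, Pi.single_apply, smul_eq_mul, mul_sub, Finset.sum_sub_distrib, mul_ite,
    mul_one, mul_zero, eq_comm (a := x)]

theorem satisfiesFlow_iff {f : E → ℝ} {d : V → ℝ} :
    satisfiesFlow hd tl f d ↔ netInflow hd tl f = d := by
  simp only [satisfiesFlow, funext_iff, netInflow_apply, eq_comm]

theorem netInflow_single [DecidableEq E] (e : E) (r : ℝ) :
    netInflow hd tl (Pi.single e r) = r • (Pi.single (hd e) 1 - Pi.single (tl e) 1) :=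
  Fintype.linearCombination_apply_single _ _ _ _

theorem sum_netInflow (R : Finset V) (f : E → ℝ) :
    ∑ x ∈ R, netInflow hd tl f x
      = ∑ e, f e * ((if hd e ∈ R then 1 else 0) - if tl e ∈ R then 1 else 0) := by
  simp only [netInflow, Fintype.linearCombination_apply, Finset.sum_apply, Pi.smul_apply,
    Pi.sub_apply, Pi.single_apply, smul_eq_mul]
  rw [Finset.sum_comm]
  simp [← Finset.mul_sum, Finset.sum_sub_distrib]

theorem sum_netInflow_univ [Fintype V] (f : E → ℝ) : ∑ x, netInflow hd tl f x = 0 := by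
  simp [sum_netInflow]

theorem sum_netInflow_le_sum_netInflow (R : Finset V) {f g : E → ℝ}
    (hin : ∀ e, hd e ∈ R → tl e ∉ R → g e ≤ f e)
    (hout : ∀ e, tl e ∈ R → hd e ∉ R → f e ≤ g e) :
    ∑ x ∈ R, netInflow hd tl g x ≤ ∑ x ∈ R, netInflow hd tl f x := by
  rw [sum_netInflow, sum_netInflow]
  refine Finset.sum_le_sum fun e _ => ?_
  by_cases h₁ : hd e ∈ R <;> by_cases h₂ : tl e ∈ R <;>
    simp [h₁, h₂, hin e, hout e]

end NetInflow

section Residual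

variable {E : Type*} (lo hi h : E → ℝ)

def IsResidualDirection (p : E → ℝ) : Prop :=
  ∀ e, (0 < p e → h e < hi e) ∧ (p e < 0 → lo e < h e)

variable {lo hi h}

namespace IsResidualDirection

theorem zero : IsResidualDirection lo hi h 0 := fun _ => by simp

variable [DecidableEq E] {p : E → ℝ}

theorem add_single (hp : IsResidualDirection lo hi h p) {e : E} (he : h e < hi e) :
    IsResidualDirection lo hi h (p + Pi.single e 1) := by
  intro e'
  rcases eq_or_ne e' e with rfl | hne
  · refine ⟨fun _ => he, fun hneg => (hp e').2 ?_⟩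
    simp only [Pi.add_apply, Pi.single_eq_same] at hneg
    linarith
  · simpa [hne] using hp e'

theorem sub_single (hp : IsResidualDirection lo hi h p) {e : E} (he : lo e < h e) :
    IsResidualDirection lo hi h (p - Pi.single e 1) := by
  intro e'
  rcases eq_or_ne e' e with rfl | hne
  · refine ⟨fun hpos => (hp e').1 ?_, fun _ => he⟩
    simp only [Pi.sub_apply, Pi.single_eq_same] at hpos
    linarith
  · simpa [hne] using hp e'

end IsResidualDirection

theorem IsResidualDirection.exists_add_smul_mem_Icc [Finite E] {p : E → ℝ}
    (hp : IsResidualDirection lo hi h p) (hh : h ∈ Set.Icc lo hi) :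
    ∃ t : ℝ, 0 < t ∧ h + t • p ∈ Set.Icc lo hi := by
  have hlim : ∀ e, Tendsto (fun t : ℝ => h e + t * p e) (𝓝[>] 0) (𝓝 (h e)) := fun e =>
    tendsto_nhdsWithin_of_tendsto_nhds <| by
      simpa using (tendsto_const_nhds (x := h e)).add
        ((tendsto_id (x := 𝓝 (0 : ℝ))).mul_const (p e))
  have hev : ∀ᶠ t in 𝓝[>] (0 : ℝ), ∀ e, lo e ≤ h e + t * p e ∧ h e + t * p e ≤ hi e := by
    refine eventually_all.2 fun e => ?_
    have hpos : ∀ᶠ t in 𝓝[>] (0 : ℝ), 0 < t := self_mem_nhdsWithin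
    rcases lt_trichotomy (p e) 0 with hneg | hzero | hpos'
    · filter_upwards [hpos, (hlim e).eventually (lt_mem_nhds ((hp e).2 hneg))] with t ht hlo
      exact ⟨hlo.le, by nlinarith [hh.2 e]⟩
    · exact Eventually.of_forall fun t => by simpa [hzero] using ⟨hh.1 e, hh.2 e⟩
    · filter_upwards [hpos, (hlim e).eventually (gt_mem_nhds ((hp e).1 hpos'))] with t ht hhi
      exact ⟨by nlinarith [hh.1 e], hhi.le⟩
  obtain ⟨t, ht, ht0⟩ := (hev.and self_mem_nhdsWithin).exists
  exact ⟨t, ht0, fun e => (ht e).1, fun e => (ht e).2⟩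

end Residual

section Subflow

variable {V E : Type*} [Fintype E] [DecidableEq V] {hd tl : E → V} {lo hi f g h : E → ℝ}
  {v w : V}

/-- Every arc crossing the boundary of `R` is saturated by `h`. -/
theorem sum_netInflow_le_of_residualClosed (R : Finset V) (hf : f ∈ Set.Icc lo hi)
    (hfwd : ∀ e, tl e ∈ R → h e < hi e → hd e ∈ R)
    (hbwd : ∀ e, hd e ∈ R → lo e < h e → tl e ∈ R) :
    ∑ x ∈ R, netInflow hd tl h x ≤ ∑ x ∈ R, netInflow hd tl f x :=
  sum_netInflow_le_sum_netInflow hd tl R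
    (fun e hin hout => (not_lt.1 (mt (hbwd e hin) hout)).trans (hf.1 e))
    (fun e hin hout => (hf.2 e).trans (not_lt.1 (mt (hfwd e hin) hout)))

theorem netInflow_add_netInflow_eq_zero [Fintype V] (hvw : w ≠ v)
    (hg : ∀ u, u ≠ v → u ≠ w → netInflow hd tl g u = 0) :
    netInflow hd tl g v + netInflow hd tl g w = 0 := by
  rw [← Fintype.sum_eq_add v w hvw.symm fun u hu => hg u hu.1 hu.2, sum_netInflow_univ]

theorem netInflow_eq_smul_single_sub_single [Fintype V] (hvw : w ≠ v)
    (hg : ∀ u, u ≠ v → u ≠ w → netInflow hd tl g u = 0) :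
    netInflow hd tl g = netInflow hd tl g v • (Pi.single v 1 - Pi.single w 1) := by
  funext u
  by_cases huv : u = v
  · subst huv; simp [hvw]
  by_cases huw : u = w
  · subst huw
    simpa [huv] using eq_neg_of_add_eq_zero_right (netInflow_add_netInflow_eq_zero hvw hg)
  simp [huv, huw, hg u huv huw]

/-- If `v` were residually reachable from `w`, augmenting `h` along the way would contradict
its maximality; so the residually reachable set is a cut around `w` saturated by `h`. -/
theorem neg_netInflow_le_of_isMax [Fintype V] (hf : f ∈ Set.Icc lo hi)
    (hsrc : ∀ u, u ≠ v → netInflow hd tl f u ≤ 0) (hvw : w ≠ v)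
    (hh : h ∈ Set.Icc lo hi) (hhc : ∀ u, u ≠ v → u ≠ w → netInflow hd tl h u = 0)
    (hmax : ∀ g ∈ Set.Icc lo hi, (∀ u, u ≠ v → u ≠ w → netInflow hd tl g u = 0) →
      netInflow hd tl g v ≤ netInflow hd tl h v) :
    -netInflow hd tl f w ≤ netInflow hd tl h v := by
  classical
  let reach : V → Prop := fun u => ∃ p, IsResidualDirection lo hi h p ∧
    netInflow hd tl p = Pi.single u 1 - Pi.single w 1
  have hv : ¬reach v := by
    rintro ⟨p, hp, hpv⟩
    obtain ⟨t, ht, hmem⟩ := hp.exists_add_smul_mem_Icc hh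
    have hnet : netInflow hd tl (h + t • p) = netInflow hd tl h
        + t • (Pi.single v 1 - Pi.single w 1) := by
      rw [map_add, map_smul, hpv]
    have hle := hmax _ hmem fun u huv huw => by simp [hnet, hhc u huv huw, huv, huw]
    have hgain : netInflow hd tl (h + t • p) v = netInflow hd tl h v + t := by simp [hnet, hvw]
    linarith
  let R := Finset.univ.filter reach
  have hwR : w ∈ R := Finset.mem_filter.2 ⟨Finset.mem_univ _, 0, .zero, by simp⟩
  have hcut := sum_netInflow_le_of_residualClosed (hd := hd) (tl := tl) R hf
    (fun e htl he => by
      obtain ⟨p, hp, hpe⟩ := (Finset.mem_filter.1 htl).2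
      refine Finset.mem_filter.2 ⟨Finset.mem_univ _, p + Pi.single e 1, hp.add_single he, ?_⟩
      rw [map_add, hpe, netInflow_single, one_smul]; abel)
    (fun e hhd he => by
      obtain ⟨p, hp, hpe⟩ := (Finset.mem_filter.1 hhd).2
      refine Finset.mem_filter.2 ⟨Finset.mem_univ _, p - Pi.single e 1, hp.sub_single he, ?_⟩
      rw [map_sub, hpe, netInflow_single, one_smul]; abel)
  have hlhs : ∑ x ∈ R, netInflow hd tl h x = netInflow hd tl h w :=
    Finset.sum_eq_single_of_mem w hwR fun u hu huw =>
      hhc u (fun huv => hv (huv ▸ (Finset.mem_filter.1 hu).2)) huw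
  have hrhs : ∑ x ∈ R, netInflow hd tl f x ≤ netInflow hd tl f w := by
    rw [← Finset.add_sum_erase R _ hwR]
    refine add_le_of_nonpos_right (Finset.sum_nonpos fun u hu => hsrc u ?_)
    exact fun huv => hv (huv ▸ (Finset.mem_filter.1 (Finset.mem_of_mem_erase hu)).2)
  linarith [netInflow_add_netInflow_eq_zero hvw hhc]

/-- Maximize the inflow into `v` over the compact set of flows in the box that are conserved
outside `{v, w}`, then scale the maximizer down. -/
theorem exists_mem_Icc_netInflow_eq [Fintype V] (hf : f ∈ Set.Icc lo hi) (h0 : 0 ∈ Set.Icc lo hi)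
    (hsrc : ∀ u, u ≠ v → netInflow hd tl f u ≤ 0) (hvw : w ≠ v) :
    ∃ h ∈ Set.Icc lo hi,
      netInflow hd tl h = (-netInflow hd tl f w) • (Pi.single v 1 - Pi.single w 1) := by
  have hcont (u : V) : Continuous fun g : E → ℝ => netInflow hd tl g u :=
    (continuous_apply u).comp (netInflow hd tl).continuous_of_finiteDimensional
  let K := Set.Icc lo hi ∩ {g | ∀ u, u ≠ v → u ≠ w → netInflow hd tl g u = 0}
  have hK : IsCompact K := isCompact_Icc.inter_right <| by
    simp only [Set.ofPred_forall]
    exact isClosed_iInter fun u => isClosed_iInter fun _ => isClosed_iInter fun _ =>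
      isClosed_eq (hcont u) continuous_const
  obtain ⟨h, hhK, hmax⟩ :=
    hK.exists_isMaxOn ⟨0, h0, fun u _ _ => by simp⟩ (hcont v).continuousOn
  have hT : 0 ≤ -netInflow hd tl f w := neg_nonneg.2 (hsrc w hvw)
  have hTD := neg_netInflow_le_of_isMax hf hsrc hvw hhK.1 hhK.2 fun g hg hgc => hmax ⟨hg, hgc⟩
  have hnet := netInflow_eq_smul_single_sub_single hvw hhK.2
  set D := netInflow hd tl h v
  refine ⟨(-netInflow hd tl f w / D) • h, (convex_Icc lo hi).smul_mem_of_zero_mem h0 hhK.1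
    ⟨div_nonneg hT (hT.trans hTD), div_le_one_of_le₀ hTD (hT.trans hTD)⟩, ?_⟩
  rw [map_smul, hnet, smul_smul, div_mul_cancel_of_imp fun hD => le_antisymm (hD ▸ hTD) hT]

theorem exists_mem_uIcc_netInflow_eq [Fintype V]
    (hsrc : ∀ u, u ≠ v → netInflow hd tl f u ≤ 0) (w : V) :
    ∃ h ∈ Set.uIcc 0 f,
      netInflow hd tl h = (-netInflow hd tl f w) • (Pi.single v 1 - Pi.single w 1) := by
  rcases eq_or_ne w v with rfl | hvw
  · exact ⟨0, Set.left_mem_uIcc, by simp⟩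
  · exact exists_mem_Icc_netInflow_eq ⟨inf_le_right, le_sup_right⟩ ⟨inf_le_left, le_sup_left⟩
      hsrc hvw

end Subflow

section Supply

variable {V E : Type*} [Fintype V] [Fintype E] [DecidableEq V] {hd tl : E → V}
  {s : V → ℝ}

theorem assign_eq_add (hs : ∀ u, s u ≤ 0) (v w : V) :
    assign s w = assign s v + (∑ u, |s u|) • (Pi.single w 1 - Pi.single v 1) := by
  have hσ : ∑ u, |s u| = -∑ u, s u := by
    rw [← Finset.sum_neg_distrib]
    exact Finset.sum_congr rfl fun u _ => abs_of_nonpos (hs u)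
  have herase (y : V) := Finset.add_sum_erase Finset.univ s (Finset.mem_univ y)
  funext x
  by_cases hxw : x = w <;> by_cases hxv : x = v <;>
    simp only [assign, hxw, hxv, Pi.add_apply, Pi.smul_apply, Pi.sub_apply, Pi.single_apply,
      if_true, if_false, hσ, smul_eq_mul] <;> subst_vars <;> grind

theorem abs_sub_mul_le_of_mem_uIcc {a b t M : ℝ} (hb : b ∈ Set.uIcc 0 a) (ht : 0 ≤ t)
    (htM : t ≤ M + 1) (hM : 1 ≤ M) : |a - t * b| ≤ M * |a| := by
  rcases le_total 0 a with ha | ha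
  · rw [Set.uIcc_of_le ha] at hb
    rw [abs_of_nonneg ha, abs_le]
    constructor <;> nlinarith [hb.1, hb.2]
  · rw [Set.uIcc_of_ge ha] at hb
    rw [abs_of_nonpos ha, abs_le]
    constructor <;> nlinarith [hb.1, hb.2]

/-- Subtract from `f` its `w`-to-`v` subflow amplified by `η = ∑ u, |s u| / |s w|`: this
reroutes the whole supply to `w`, and costs at most a factor `max (η - 1) 1` on every edge. -/
theorem exists_netInflow_eq_assign_master (hs : ∀ u, s u ≤ 0) {w : V}
    (hw : ∀ u, |s u| ≤ |s w|) {l M : ℝ} (hl : 0 ≤ l) (hM : 1 ≤ M)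
    (hηM : (∑ u, |s u|) / |s w| - 1 ≤ M) {v : V} {f : E → ℝ}
    (hf : netInflow hd tl f = l • assign s v) :
    ∃ g : E → ℝ, (∀ e, |g e| ≤ |f e|) ∧ netInflow hd tl g = (l / M) • assign s w := by
  have hsrc (u : V) (hu : u ≠ v) : netInflow hd tl f u ≤ 0 := by
    simpa [hf, assign, hu] using mul_nonpos_of_nonneg_of_nonpos hl (hs u)
  obtain ⟨h, hh, hnet⟩ := exists_mem_uIcc_netInflow_eq hsrc w
  have hnet' : netInflow hd tl h = (l * |s w|) • (Pi.single v 1 - Pi.single w 1) := by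
    rcases eq_or_ne w v with rfl | hvw
    · simp [hnet]
    · simp [hnet, hf, assign, hvw, abs_of_nonpos (hs w)]
  set η := (∑ u, |s u|) / |s w|
  have hη : η * |s w| = ∑ u, |s u| := div_mul_cancel_of_imp fun hw0 =>
    Finset.sum_eq_zero fun u _ => le_antisymm (hw0 ▸ hw u) (abs_nonneg _)
  have hM0 : 0 < M := zero_lt_one.trans_le hM
  refine ⟨M⁻¹ • (f - η • h), fun e => ?_, ?_⟩
  · simp only [Pi.smul_apply, Pi.sub_apply, smul_eq_mul, abs_mul, abs_inv, abs_of_pos hM0]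
    rw [inv_mul_le_iff₀ hM0]
    exact abs_sub_mul_le_of_mem_uIcc ⟨hh.1 e, hh.2 e⟩ (by positivity) (by linarith) hM
  · rw [map_smul, map_sub, map_smul, hf, hnet', assign_eq_add hs v w, ← hη]
    module

end Supply

section Concurrent

variable {V E ι : Type*} [Fintype V] [Fintype E] [Fintype ι] [DecidableEq V]
  {hd tl : E → V} {c : E → ℝ}

def IsValidFlow (hd tl : E → V) (c : E → ℝ) (d : ι → V → ℝ) (l : ℝ) (f : ι → E → ℝ) : Prop :=
  (∀ e, ∑ i, |f i e| ≤ c e) ∧ ∀ i, satisfiesFlow hd tl (f i) fun v => l * d i v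

theorem lamD_eq (hd tl : E → V) (c : E → ℝ) (d : ι → V → ℝ) :
    lamD hd tl c d = sSup {l | 0 ≤ l ∧ ∃ f, IsValidFlow hd tl c d l f} :=
  rfl

theorem lamS_eq (hd tl : E → V) (c : E → ℝ) (s : ι → V → ℝ) :
    lamS hd tl c s =
      sSup {l | 0 ≤ l ∧ ∃ (v : ι → V) (f : ι → E → ℝ),
        IsValidFlow hd tl c (fun i => assign (s i) (v i)) l f} :=
  rfl

theorem IsValidFlow.reroute_to_master {s : ι → V → ℝ} (hs : ∀ i v, s i v ≤ 0) {w : ι → V}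
    (hw : ∀ i v, |s i v| ≤ |s i (w i)|) {l M : ℝ} (hl : 0 ≤ l) (hM : 1 ≤ M)
    (hηM : ∀ i, (∑ v, |s i v|) / |s i (w i)| - 1 ≤ M) {v : ι → V} {f : ι → E → ℝ}
    (hf : IsValidFlow hd tl c (fun i => assign (s i) (v i)) l f) :
    ∃ g, IsValidFlow hd tl c (fun i => assign (s i) (w i)) (l / M) g := by
  choose g hg hgnet using fun i =>
    exists_netInflow_eq_assign_master (hs i) (hw i) hl hM (hηM i)
      ((satisfiesFlow_iff hd tl).1 (hf.2 i))
  exact ⟨g, fun e => (Finset.sum_le_sum fun i _ => hg i e).trans (hf.1 e),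
    fun i => (satisfiesFlow_iff hd tl).2 (hgnet i)⟩

end Concurrent

theorem Real.sSup_div_le_sSup {S D : Set ℝ} {M : ℝ} (hM : 0 < M) (hD : ∀ x ∈ D, 0 ≤ x)
    (hDS : D ⊆ S) (hSD : ∀ x ∈ S, x / M ∈ D) : sSup S / M ≤ sSup D := by
  by_cases hDb : BddAbove D
  · rw [div_le_iff₀ hM]
    refine Real.sSup_le (fun x hx => ?_) (mul_nonneg (Real.sSup_nonneg hD) hM.le)
    exact (div_le_iff₀ hM).1 (le_csSup hDb (hSD x hx))
  · rw [Real.sSup_of_not_bddAbove fun hSb => hDb (hSb.mono hDS), zero_div]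
    exact Real.sSup_nonneg hD

theorem concentration_approx_general {V E ι : Type*} [Fintype V] [Fintype E] [Fintype ι]
    [DecidableEq V]
    (hd tl : E → V) (c : E → ℝ)
    (s : ι → V → ℝ) (hs : ∀ i v, s i v ≤ 0)
    (w : ι → V) (hw : ∀ i v, |s i v| ≤ |s i (w i)|)
    (η : ℝ) (hη : η = ⨆ i : ι, (∑ v : V, |s i v|) / |s i (w i)|) :
    lamS hd tl c s / max (η - 1) 1
      ≤ lamD hd tl c (fun i => assign (s i) (w i)) := by
  have hM : 1 ≤ max (η - 1) 1 := le_max_right _ _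
  have hηM (i : ι) : (∑ v, |s i v|) / |s i (w i)| - 1 ≤ max (η - 1) 1 :=
    le_max_of_le_left <| by
      rw [hη]
      linarith [le_ciSup (Set.finite_range fun j => (∑ v, |s j v|) / |s j (w j)|).bddAbove i]
  rw [lamS_eq, lamD_eq]
  exact Real.sSup_div_le_sSup (zero_lt_one.trans_le hM) (fun l hl => hl.1)
    (fun l ⟨hl, f, hf⟩ => ⟨hl, w, f, hf⟩)
    fun l ⟨hl, _, _, hf⟩ =>
      ⟨div_nonneg hl (zero_le_one.trans hM), hf.reroute_to_master hs hw hl hM hηM⟩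

/-- Theorem: choosing a master source `w i` as the target of each nonzero supply
vector `s i` is a `max{η-1,1}`-approximate solution to LoMuF, where
`η = max_i (∑_v |s i v|)/|s i (w i)|` is the concentration of the supply vectors. -/
theorem concentration_approx {V E ι : Type*} [Fintype V] [Fintype E] [Fintype ι]
    [DecidableEq V] [Nonempty ι]
    (hd tl : E → V) (c : E → ℝ) (hc : ∀ e, 0 ≤ c e)
    (s : ι → V → ℝ) (hs : ∀ i v, s i v ≤ 0) (hne : ∀ i, s i ≠ 0)
    (w : ι → V) (hw : ∀ i v, |s i v| ≤ |s i (w i)|)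
    (η : ℝ) (hη : η = ⨆ i : ι, (∑ v : V, |s i v|) / |s i (w i)|) :
    lamS hd tl c s / max (η - 1) 1
      ≤ lamD hd tl c (fun i => assign (s i) (w i)) :=
  concentration_approx_general hd tl c s hs w hw η hη
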